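/- arXiv:0808.2617 — 6 statements merged into one kernel-verified Lean document; each statement's English description precedes it below -/
import Mathlib

section
/- The function G(x) = (1/2) sgn(x)(1 - e^{-|x|}) satisfies, for all real α, β, γ with α + β + γ = 0 and α, β, γ all nonzero, the functional equation G'(α)(G(β) + G(γ)) + G'(β)(G(γ) + G(α)) + G'(γ)(G(α) + G(β)) = 0, where G'(x) = (1/2)e^{-|x|} for x ≠ 0. -/
/-!
Two of three reals summing to zero have the same sign; since `G` is odd and `G'` even, we may
take them to be `a, b ≥ 0`, so that the third is `-(a + b)`. On `[0, ∞)` both `G` and `G'` are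
affine in `e^{-x}`, and `e^{-(a+b)} = e^{-a} e^{-b}` turns the left-hand side into a polynomial
in `e^{-a}, e^{-b}` that vanishes identically.
-/

noncomputable def G (x : ℝ) : ℝ := (1/2) * Real.sign x * (1 - Real.exp (-|x|))

noncomputable def G' (x : ℝ) : ℝ := (1/2) * Real.exp (-|x|)

open Real

lemma G_neg (x : ℝ) : G (-x) = -G x := by
  simp only [G, Real.sign_neg, abs_neg]
  ring

lemma G'_neg (x : ℝ) : G' (-x) = G' x := by
  simp only [G', abs_neg]

lemma G_of_nonneg {x : ℝ} (hx : 0 ≤ x) : G x = (1 - exp (-x)) / 2 := by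
  rcases hx.eq_or_lt with rfl | hx
  · simp [G]
  · rw [G, Real.sign_of_pos hx, abs_of_pos hx]
    ring

lemma G'_of_nonneg {x : ℝ} (hx : 0 ≤ x) : G' x = exp (-x) / 2 := by
  rw [G', abs_of_nonneg hx]
  ring

lemma G_functional_equation_of_nonneg {a b : ℝ} (ha : 0 ≤ a) (hb : 0 ≤ b) :
    G' a * (G b + G (-(a + b))) + G' b * (G (-(a + b)) + G a)
      + G' (-(a + b)) * (G a + G b) = 0 := by
  have hab : 0 ≤ a + b := add_nonneg ha hb
  rw [G_neg, G'_neg, G_of_nonneg ha, G_of_nonneg hb, G_of_nonneg hab, G'_of_nonneg ha,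
    G'_of_nonneg hb, G'_of_nonneg hab, neg_add, exp_add]
  ring

lemma G_functional_equation_of_mul_nonneg {a b : ℝ} (hab : 0 ≤ a * b) :
    G' a * (G b + G (-(a + b))) + G' b * (G (-(a + b)) + G a)
      + G' (-(a + b)) * (G a + G b) = 0 := by
  rcases mul_nonneg_iff.mp hab with ⟨ha, hb⟩ | ⟨ha, hb⟩
  · exact G_functional_equation_of_nonneg ha hb
  · have h := G_functional_equation_of_nonneg (neg_nonneg.mpr ha) (neg_nonneg.mpr hb)
    rw [show -(-a + -b) = a + b by ring] at h
    simp only [G_neg, G'_neg] at h ⊢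
    linarith

lemma mul_nonneg_or_mul_nonneg_or_mul_nonneg (x y z : ℝ) :
    0 ≤ x * y ∨ 0 ≤ y * z ∨ 0 ≤ z * x := by
  by_contra! h
  obtain ⟨hxy, hyz, hzx⟩ := h
  nlinarith [mul_pos_of_neg_of_neg hxy hyz, sq_nonneg (x * y * z)]

theorem G_functional_equation_general (α β γ : ℝ)
    (hsum : α + β + γ = 0) :
    G' α * (G β + G γ) + G' β * (G γ + G α) + G' γ * (G α + G β) = 0 := by
  rcases mul_nonneg_or_mul_nonneg_or_mul_nonneg α β γ with h | h | h
  · obtain rfl : γ = -(α + β) := by linarith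
    exact G_functional_equation_of_mul_nonneg h
  · have h := G_functional_equation_of_mul_nonneg h
    rw [show -(β + γ) = α by linarith] at h
    linarith
  · have h := G_functional_equation_of_mul_nonneg h
    rw [show -(γ + α) = β by linarith] at h
    linarith

theorem G_functional_equation (α β γ : ℝ) (hα : α ≠ 0) (hβ : β ≠ 0) (hγ : γ ≠ 0)
    (hsum : α + β + γ = 0) :
    G' α * (G β + G γ) + G' β * (G γ + G α) + G' γ * (G α + G β) = 0 :=
  G_functional_equation_general α β γ hsum
end

section
/- For the N-peakon bracket of the Popowicz system, each quantity C_j = a_j / b_j² (for b_j ≠ 0) is a Casimir: its bracket with each of the coordinate functions a_k, b_k, q_k vanishes for all k. Verify this for N = 2 and j = 1: {C₁, a₂} = {C₁, b₂} = {C₁, q₂} = {C₁, a₁} = {C₁, b₁} = {C₁, q₁} = 0, where the bracket of functions is computed via the Leibniz rule from the elementary brackets. -/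
/-!
Every elementary bracket of `a₁` with a coordinate is, up to the factor `2 a₁ / b₁`, the
corresponding bracket of `b₁`: `b₁ {a₁, g} = 2 a₁ {b₁, g}`. Hence `a₁` and `b₁²` generate
proportional Hamiltonian vector fields, and the Leibniz expansion of `{a₁ / b₁², g}` cancels.
For the self-brackets this needs `sgn (q₁ - q₁) = 0`.
-/

theorem leibniz_div_sq_eq_zero {K : Type*} [Field K] {a b X Y : K} (hb : b ≠ 0) (Z : K)
    (h : b * X = 2 * a * Y) : 1 / b ^ 2 * X + -(2 * a / b ^ 3) * Y + 0 * Z = 0 := by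
  field_simp
  linear_combination h

theorem Real.sign_sub_comm (x y : ℝ) : Real.sign (y - x) = -Real.sign (x - y) := by
  rw [← neg_sub, Real.sign_neg]

theorem casimir_C1_two_peakon_general (a₁ a₂ b₁ b₂ q₁ q₂ : ℝ) (hb₁ : b₁ ≠ 0)
    (s : ℝ) (hs : s = Real.sign (q₁ - q₂))
    (E : ℝ)
    (s₀ : ℝ) (hs₀ : s₀ = Real.sign (q₁ - q₁))
    (E₀ : ℝ) :
    -- {C₁, a₂} = 0
    ((1/b₁^2) * (2 * a₁ * a₂ * s * E)
      + (-(2 * a₁ / b₁^3)) * (-(a₂ * b₁ * Real.sign (q₂ - q₁) * E))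
      + 0 * (a₂ * E) = 0) ∧
    -- {C₁, b₂} = 0
    ((1/b₁^2) * (a₁ * b₂ * s * E)
      + (-(2 * a₁ / b₁^3)) * ((1/2) * b₁ * b₂ * s * E)
      + 0 * ((1/2) * b₂ * E) = 0) ∧
    -- {C₁, q₂} = 0
    ((1/b₁^2) * (-(a₁ * E))
      + (-(2 * a₁ / b₁^3)) * (-((1/2) * b₁ * E))
      + 0 * ((1/2) * s * (1 - E)) = 0) ∧
    -- {C₁, a₁} = 0
    ((1/b₁^2) * (2 * a₁ * a₁ * s₀ * E₀)
      + (-(2 * a₁ / b₁^3)) * (-(a₁ * b₁ * s₀ * E₀))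
      + 0 * (a₁ * E₀) = 0) ∧
    -- {C₁, b₁} = 0
    ((1/b₁^2) * (a₁ * b₁ * s₀ * E₀)
      + (-(2 * a₁ / b₁^3)) * ((1/2) * b₁ * b₁ * s₀ * E₀)
      + 0 * ((1/2) * b₁ * E₀) = 0) ∧
    -- {C₁, q₁} = 0
    ((1/b₁^2) * (-(a₁ * E₀))
      + (-(2 * a₁ / b₁^3)) * (-((1/2) * b₁ * E₀))
      + 0 * ((1/2) * s₀ * (1 - E₀)) = 0) := by
  rw [Real.sign_sub_comm, ← hs]
  obtain rfl : s₀ = 0 := by rw [hs₀, sub_self, Real.sign_zero]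
  refine ⟨?_, ?_, ?_, ?_, ?_, ?_⟩ <;> apply leibniz_div_sq_eq_zero hb₁ <;> ring

/-- The Casimir property of `C₁ = a₁/b₁²` for the 2-peakon Poisson bracket of the
Popowicz system.  The bracket of `C₁` with a coordinate function `g` is computed
via the Leibniz rule: `{C₁, g} = (∂C₁/∂a₁){a₁,g} + (∂C₁/∂b₁){b₁,g} + (∂C₁/∂q₁){q₁,g}`,
with `∂C₁/∂a₁ = 1/b₁²`, `∂C₁/∂b₁ = -2a₁/b₁³`, `∂C₁/∂q₁ = 0`, and the elementary
brackets given by the formulas of the Popowicz peakon Poisson structure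
(using antisymmetry, e.g. `{b₁,a₂} = -{a₂,b₁}`). -/
theorem casimir_C1_two_peakon (a₁ a₂ b₁ b₂ q₁ q₂ : ℝ) (hb₁ : b₁ ≠ 0)
    (s : ℝ) (hs : s = Real.sign (q₁ - q₂))
    (E : ℝ) (hE : E = Real.exp (-|q₁ - q₂|))
    (s₀ : ℝ) (hs₀ : s₀ = Real.sign (q₁ - q₁))
    (E₀ : ℝ) (hE₀ : E₀ = Real.exp (-|q₁ - q₁|)) :
    -- {C₁, a₂} = 0
    ((1/b₁^2) * (2 * a₁ * a₂ * s * E)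
      + (-(2 * a₁ / b₁^3)) * (-(a₂ * b₁ * Real.sign (q₂ - q₁) * E))
      + 0 * (a₂ * E) = 0) ∧
    -- {C₁, b₂} = 0
    ((1/b₁^2) * (a₁ * b₂ * s * E)
      + (-(2 * a₁ / b₁^3)) * ((1/2) * b₁ * b₂ * s * E)
      + 0 * ((1/2) * b₂ * E) = 0) ∧
    -- {C₁, q₂} = 0
    ((1/b₁^2) * (-(a₁ * E))
      + (-(2 * a₁ / b₁^3)) * (-((1/2) * b₁ * E))
      + 0 * ((1/2) * s * (1 - E)) = 0) ∧
    -- {C₁, a₁} = 0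
    ((1/b₁^2) * (2 * a₁ * a₁ * s₀ * E₀)
      + (-(2 * a₁ / b₁^3)) * (-(a₁ * b₁ * s₀ * E₀))
      + 0 * (a₁ * E₀) = 0) ∧
    -- {C₁, b₁} = 0
    ((1/b₁^2) * (a₁ * b₁ * s₀ * E₀)
      + (-(2 * a₁ / b₁^3)) * ((1/2) * b₁ * b₁ * s₀ * E₀)
      + 0 * ((1/2) * b₁ * E₀) = 0) ∧
    -- {C₁, q₁} = 0
    ((1/b₁^2) * (-(a₁ * E₀))
      + (-(2 * a₁ / b₁^3)) * (-((1/2) * b₁ * E₀))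
      + 0 * ((1/2) * s₀ * (1 - E₀)) = 0) :=
  casimir_C1_two_peakon_general a₁ a₂ b₁ b₂ q₁ q₂ hb₁ s hs E s₀ hs₀ E₀
end

section
/- For the 2-peakon system of the Popowicz equation, the quantity J = b₁b₂(1 - e^{-|q₁ - q₂|}) Poisson-commutes with the Hamiltonian h = 2(a₁ + b₁ + a₂ + b₂): {J, h} = 0, where brackets are computed from the elementary peakon brackets via the Leibniz rule (on the region q₁ ≠ q₂). -/
/-- The left-hand side is `{J, h}` expanded by the Leibniz rule,
`(∂J/∂b₁){b₁,h} + (∂J/∂b₂){b₂,h} + (∂J/∂q₁){q₁,h} + (∂J/∂q₂){q₂,h}`,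
with `{x,h} = 2({x,a₁} + {x,a₂} + {x,b₁} + {x,b₂})` read off the elementary brackets
(antisymmetry giving e.g. `{b₁,a₂} = -{a₂,b₁}`). -/
theorem J_commutes_with_h_general (a₁ a₂ b₁ b₂ q₁ q₂ : ℝ)
    (s : ℝ) (hs : s = Real.sign (q₁ - q₂))
    (s' : ℝ) (hs' : s' = Real.sign (q₂ - q₁))
    (s₀ : ℝ) (hs₀ : s₀ = Real.sign (0 : ℝ))
    (E : ℝ)
    (E₀ : ℝ) (hE₀ : E₀ = Real.exp (-|(0 : ℝ)|)) :
    (b₂ * (1 - E)) *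
        (2 * ((-(a₁ * b₁ * s₀ * E₀)) + (-(a₂ * b₁ * s' * E))
            + (1/2) * b₁ * b₁ * s₀ * E₀ + (1/2) * b₁ * b₂ * s * E))
      + (b₁ * (1 - E)) *
        (2 * ((-(a₁ * b₂ * s * E)) + (-(a₂ * b₂ * s₀ * E₀))
            + (1/2) * b₂ * b₁ * s' * E + (1/2) * b₂ * b₂ * s₀ * E₀))
      + (b₁ * b₂ * s * E) *
        (2 * (a₁ * E₀ + a₂ * E + (1/2) * b₁ * E₀ + (1/2) * b₂ * E))
      + (-(b₁ * b₂ * s * E)) *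
        (2 * (a₁ * E + a₂ * E₀ + (1/2) * b₁ * E + (1/2) * b₂ * E₀)) = 0 := by
  obtain rfl : s₀ = 0 := by rw [hs₀, Real.sign_zero]
  obtain rfl : E₀ = 1 := by rw [hE₀, abs_zero, neg_zero, Real.exp_zero]
  obtain rfl : s' = -s := by rw [hs', hs, ← Real.sign_neg, neg_sub]
  ring

/-- For the 2-peakon system of the Popowicz equation, `J = b₁b₂(1 - e^{-|q₁-q₂|})`
Poisson-commutes with the Hamiltonian `h = 2(a₁ + a₂ + b₁ + b₂)`.  The bracket
`{J, h}` is computed via the Leibniz rule as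
`{J,h} = (∂J/∂b₁){b₁,h} + (∂J/∂b₂){b₂,h} + (∂J/∂q₁){q₁,h} + (∂J/∂q₂){q₂,h}`
with `{x,h} = 2({x,a₁} + {x,a₂} + {x,b₁} + {x,b₂})` and the elementary brackets
of the Popowicz peakon Poisson structure (antisymmetry giving e.g.
`{b₁,a₂} = -{a₂,b₁}`), on the region `q₁ ≠ q₂`. -/
theorem J_commutes_with_h (a₁ a₂ b₁ b₂ q₁ q₂ : ℝ) (hq : q₁ ≠ q₂)
    (s : ℝ) (hs : s = Real.sign (q₁ - q₂))
    (s' : ℝ) (hs' : s' = Real.sign (q₂ - q₁))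
    (s₀ : ℝ) (hs₀ : s₀ = Real.sign (0 : ℝ))
    (E : ℝ) (hE : E = Real.exp (-|q₁ - q₂|))
    (E₀ : ℝ) (hE₀ : E₀ = Real.exp (-|(0 : ℝ)|)) :
    (b₂ * (1 - E)) *
        (2 * ((-(a₁ * b₁ * s₀ * E₀)) + (-(a₂ * b₁ * s' * E))
            + (1/2) * b₁ * b₁ * s₀ * E₀ + (1/2) * b₁ * b₂ * s * E))
      + (b₁ * (1 - E)) *
        (2 * ((-(a₁ * b₂ * s * E)) + (-(a₂ * b₂ * s₀ * E₀))
            + (1/2) * b₂ * b₁ * s' * E + (1/2) * b₂ * b₂ * s₀ * E₀))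
      + (b₁ * b₂ * s * E) *
        (2 * (a₁ * E₀ + a₂ * E + (1/2) * b₁ * E₀ + (1/2) * b₂ * E))
      + (-(b₁ * b₂ * s * E)) *
        (2 * (a₁ * E + a₂ * E₀ + (1/2) * b₁ * E + (1/2) * b₂ * E₀)) = 0 :=
  J_commutes_with_h_general a₁ a₂ b₁ b₂ q₁ q₂ s hs s' hs' s₀ hs₀ E E₀ hE₀
end

section
/- Along solutions of the N-peakon ODE system of the Popowicz system, each quantity a_j / b_j² is a constant of motion: d/dt (a_j(t)/b_j(t)²) = 0, provided b_j(t) ≠ 0. -/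
/-! Both `ȧ_j` and `ḃ_j` are multiples of the same sum `S_j`: `ȧ_j = 2 a_j S_j` and
`ḃ_j = b_j S_j`. Hence `d/dt (a_j / b_j²) = (ȧ_j b_j - 2 a_j ḃ_j) / b_j³ = 0`, whatever `S_j` is. -/

theorem hasDerivAt_div_sq_zero_of_logDeriv_eq_two_mul {𝕜 : Type*} [NontriviallyNormedField 𝕜]
    {f g : 𝕜 → 𝕜} {S t : 𝕜} (hf : HasDerivAt f (2 * f t * S) t)
    (hg : HasDerivAt g (g t * S) t) (hgt : g t ≠ 0) :
    HasDerivAt (fun s => f s / g s ^ 2) 0 t := by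
  have hg2 : HasDerivAt (fun s => g s ^ 2) (2 * g t * (g t * S)) t := by
    simpa using hg.fun_pow 2
  refine (hf.fun_div hg2 (pow_ne_zero 2 hgt)).congr_deriv ?_
  ring

theorem casimir_conserved_N_peakon_general (N : ℕ) (a b q : Fin N → ℝ → ℝ)
    (ha : ∀ j t, HasDerivAt (a j)
      (2 * a j t * ∑ k, (2 * a k t + b k t) * Real.sign (q j t - q k t)
        * Real.exp (-|q j t - q k t|)) t)
    (hb : ∀ j t, HasDerivAt (b j)
      (b j t * ∑ k, (2 * a k t + b k t) * Real.sign (q j t - q k t)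
        * Real.exp (-|q j t - q k t|)) t)
    (hbne : ∀ j t, b j t ≠ 0) :
    ∀ j t, deriv (fun s => a j s / (b j s)^2) t = 0 := fun j t =>
  (hasDerivAt_div_sq_zero_of_logDeriv_eq_two_mul (ha j t) (hb j t) (hbne j t)).deriv

theorem casimir_conserved_N_peakon (N : ℕ) (a b q : Fin N → ℝ → ℝ)
    (ha : ∀ j t, HasDerivAt (a j)
      (2 * a j t * ∑ k, (2 * a k t + b k t) * Real.sign (q j t - q k t)
        * Real.exp (-|q j t - q k t|)) t)
    (hb : ∀ j t, HasDerivAt (b j)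
      (b j t * ∑ k, (2 * a k t + b k t) * Real.sign (q j t - q k t)
        * Real.exp (-|q j t - q k t|)) t)
    (hq : ∀ j t, HasDerivAt (q j)
      (∑ k, (2 * a k t + b k t) * Real.exp (-|q j t - q k t|)) t)
    (hbne : ∀ j t, b j t ≠ 0) :
    ∀ j t, deriv (fun s => a j s / (b j s)^2) t = 0 :=
  casimir_conserved_N_peakon_general N a b q ha hb hbne
end

section
/- Along solutions of the 2-peakon ODE system of the Popowicz system with q₁(t) ≠ q₂(t) for all t, the quantity J(t) = b₁(t)b₂(t)(1 - e^{-|q₁(t) - q₂(t)|}) is a constant of motion: dJ/dt = 0. -/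
/-!
Write `m k = 2 a_k + b_k` and `E = exp (-(q₁ - q₂))`. With `q₁ > q₂` the equations give
`b₁' = b₁ m₂ E`, `b₂' = -b₂ m₁ E` and `(q₁ - q₂)' = (m₁ - m₂)(1 - E)`, so in
`(b₁ b₂ (1 - E))' = (b₁ b₂)' (1 - E) + b₁ b₂ E (q₁ - q₂)'` the two terms are
`b₁ b₂ (m₂ - m₁) E (1 - E)` and its negative.
-/

open Real

section TwoPeakonSums

variable (m x : Fin 2 → ℝ)

lemma sum_sign_mul_exp_zero (h : x 1 < x 0) :
    ∑ k, m k * sign (x 0 - x k) * exp (-|x 0 - x k|) = m 1 * exp (-(x 0 - x 1)) := by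
  simp [Fin.sum_univ_two, sign_of_pos (sub_pos.2 h), abs_of_pos (sub_pos.2 h)]

lemma sum_sign_mul_exp_one (h : x 1 < x 0) :
    ∑ k, m k * sign (x 1 - x k) * exp (-|x 1 - x k|) = -(m 0 * exp (-(x 0 - x 1))) := by
  simp [Fin.sum_univ_two, sign_of_neg (sub_neg.2 h), abs_sub_comm (x 1), abs_of_pos (sub_pos.2 h)]

lemma sum_mul_exp_zero (h : x 1 < x 0) :
    ∑ k, m k * exp (-|x 0 - x k|) = m 0 + m 1 * exp (-(x 0 - x 1)) := by
  simp [Fin.sum_univ_two, abs_of_pos (sub_pos.2 h)]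

lemma sum_mul_exp_one (h : x 1 < x 0) :
    ∑ k, m k * exp (-|x 1 - x k|) = m 0 * exp (-(x 0 - x 1)) + m 1 := by
  simp [Fin.sum_univ_two, abs_sub_comm (x 1), abs_of_pos (sub_pos.2 h)]

end TwoPeakonSums

lemma hasDerivAt_mul_mul_one_sub_exp_neg_eq_zero {b₁ b₂ d : ℝ → ℝ} {m₁ m₂ t : ℝ}
    (hb₁ : HasDerivAt b₁ (b₁ t * (m₂ * exp (-d t))) t)
    (hb₂ : HasDerivAt b₂ (b₂ t * -(m₁ * exp (-d t))) t)
    (hd : HasDerivAt d ((m₁ - m₂) * (1 - exp (-d t))) t) :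
    HasDerivAt (fun s => b₁ s * b₂ s * (1 - exp (-d s))) 0 t := by
  refine ((hb₁.mul hb₂).mul (hd.neg.exp.const_sub 1)).congr_deriv ?_
  simp only [Pi.mul_apply, Pi.neg_apply]
  ring

theorem J_conserved_two_peakon_general (b₁ b₂ q₁ q₂ : ℝ → ℝ)
    (a : Fin 2 → ℝ → ℝ) (b : Fin 2 → ℝ → ℝ) (q : Fin 2 → ℝ → ℝ)
    (hbidx : b = ![b₁, b₂]) (hqidx : q = ![q₁, q₂])
    (hb : ∀ j t, HasDerivAt (b j)
      (b j t * ∑ k, (2 * a k t + b k t) * Real.sign (q j t - q k t)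
        * Real.exp (-|q j t - q k t|)) t)
    (hq : ∀ j t, HasDerivAt (q j)
      (∑ k, (2 * a k t + b k t) * Real.exp (-|q j t - q k t|)) t)
    (horder : ∀ t, q₁ t > q₂ t) :
    ∀ t, deriv (fun s => b₁ s * b₂ s * (1 - Real.exp (-|q₁ s - q₂ s|))) t = 0 := by
  intro t
  subst hbidx hqidx
  have hlt : ![q₁, q₂] 1 t < ![q₁, q₂] 0 t := horder t
  have hb₁ := hb 0 t
  have hb₂ := hb 1 t
  have hd : HasDerivAt (fun s => q₁ s - q₂ s) _ t := (hq 0 t).sub (hq 1 t)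
  rw [sum_sign_mul_exp_zero _ (fun k => ![q₁, q₂] k t) hlt] at hb₁
  rw [sum_sign_mul_exp_one _ (fun k => ![q₁, q₂] k t) hlt] at hb₂
  rw [sum_mul_exp_zero _ (fun k => ![q₁, q₂] k t) hlt,
    sum_mul_exp_one _ (fun k => ![q₁, q₂] k t) hlt] at hd
  simp only [Matrix.cons_val_zero, Matrix.cons_val_one] at hb₁ hb₂ hd
  have habs : ∀ s, |q₁ s - q₂ s| = q₁ s - q₂ s := fun s => abs_of_pos (sub_pos.2 (horder s))
  simp only [habs]
  exact (hasDerivAt_mul_mul_one_sub_exp_neg_eq_zero hb₁ hb₂ (hd.congr_deriv (by ring))).deriv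

theorem J_conserved_two_peakon (a₁ a₂ b₁ b₂ q₁ q₂ : ℝ → ℝ)
    (a : Fin 2 → ℝ → ℝ) (b : Fin 2 → ℝ → ℝ) (q : Fin 2 → ℝ → ℝ)
    (haidx : a = ![a₁, a₂]) (hbidx : b = ![b₁, b₂]) (hqidx : q = ![q₁, q₂])
    (ha : ∀ j t, HasDerivAt (a j)
      (2 * a j t * ∑ k, (2 * a k t + b k t) * Real.sign (q j t - q k t)
        * Real.exp (-|q j t - q k t|)) t)
    (hb : ∀ j t, HasDerivAt (b j)
      (b j t * ∑ k, (2 * a k t + b k t) * Real.sign (q j t - q k t)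
        * Real.exp (-|q j t - q k t|)) t)
    (hq : ∀ j t, HasDerivAt (q j)
      (∑ k, (2 * a k t + b k t) * Real.exp (-|q j t - q k t|)) t)
    (horder : ∀ t, q₁ t > q₂ t) :
    ∀ t, deriv (fun s => b₁ s * b₂ s * (1 - Real.exp (-|q₁ s - q₂ s|))) t = 0 :=
  J_conserved_two_peakon_general b₁ b₂ q₁ q₂ a b q hbidx hqidx hb hq horder
end

section
/- Along solutions of the N-peakon ODE system of the Popowicz system, the Hamiltonian h = 2 Σ_{j=1}^N (a_j + b_j) is conserved: dh/dt = 0. -/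
/-!
Writing `m_j = 2 a_j + b_j`, the equations give `d/dt (a_j + b_j) = m_j D_j` with
`D_j = ∑_k m_k sgn(q_j - q_k) e^{-|q_j - q_k|}`. Hence `dh/dt = 2 ∑_{j,k} m_j m_k φ(q_j - q_k)` with
the odd kernel `φ z = sgn z · e^{-|z|}`, and a double sum of an antisymmetric array vanishes.
-/

open Finset Real

lemma sum_sum_eq_zero_of_antisymm {ι G : Type*} [Fintype ι] [AddCommGroup G] [IsAddTorsionFree G]
    (F : ι → ι → G) (hF : ∀ j k, F j k = -F k j) : ∑ j, ∑ k, F j k = 0 := by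
  rw [← self_eq_neg]
  calc ∑ j, ∑ k, F j k = ∑ j, ∑ k, F k j := sum_comm
    _ = ∑ j, ∑ k, -F j k := sum_congr rfl fun j _ => sum_congr rfl fun k _ => hF k j
    _ = -∑ j, ∑ k, F j k := by simp only [sum_neg_distrib]

lemma sign_mul_exp_neg_abs_neg (z : ℝ) :
    sign (-z) * exp (-|-z|) = -(sign z * exp (-|z|)) := by
  rw [Real.sign_neg, abs_neg, neg_mul]

theorem hamiltonian_conserved_N_peakon_general (N : ℕ) (a b q : Fin N → ℝ → ℝ)
    (ha : ∀ j t, HasDerivAt (a j)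
      (2 * a j t * ∑ k, (2 * a k t + b k t) * Real.sign (q j t - q k t)
        * Real.exp (-|q j t - q k t|)) t)
    (hb : ∀ j t, HasDerivAt (b j)
      (b j t * ∑ k, (2 * a k t + b k t) * Real.sign (q j t - q k t)
        * Real.exp (-|q j t - q k t|)) t) :
    ∀ t, deriv (fun s => 2 * ∑ j, (a j s + b j s)) t = 0 := by
  intro t
  set m : Fin N → ℝ := fun k => 2 * a k t + b k t
  set φ : ℝ → ℝ := fun z => sign z * exp (-|z|)
  have hderiv : HasDerivAt (fun s => 2 * ∑ j, (a j s + b j s))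
      (2 * ∑ j, ∑ k, m j * m k * φ (q j t - q k t)) t := by
    refine (HasDerivAt.fun_sum fun j _ => (ha j t).add (hb j t)).const_mul 2 |>.congr_deriv ?_
    congr 1
    refine sum_congr rfl fun j _ => ?_
    rw [← add_mul, mul_sum]
    exact sum_congr rfl fun k _ => by ring
  rw [hderiv.deriv, sum_sum_eq_zero_of_antisymm, mul_zero]
  intro j k
  rw [← neg_sub, show φ (-(q k t - q j t)) = -φ (q k t - q j t) from sign_mul_exp_neg_abs_neg _]
  ring

theorem hamiltonian_conserved_N_peakon (N : ℕ) (a b q : Fin N → ℝ → ℝ)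
    (ha : ∀ j t, HasDerivAt (a j)
      (2 * a j t * ∑ k, (2 * a k t + b k t) * Real.sign (q j t - q k t)
        * Real.exp (-|q j t - q k t|)) t)
    (hb : ∀ j t, HasDerivAt (b j)
      (b j t * ∑ k, (2 * a k t + b k t) * Real.sign (q j t - q k t)
        * Real.exp (-|q j t - q k t|)) t)
    (hq : ∀ j t, HasDerivAt (q j)
      (∑ k, (2 * a k t + b k t) * Real.exp (-|q j t - q k t|)) t) :
    ∀ t, deriv (fun s => 2 * ∑ j, (a j s + b j s)) t = 0 :=
  hamiltonian_conserved_N_peakon_general N a b q ha hb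
end
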